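/- Let 1 ≤ h ≤ n−1 and 0 < α < a, and consider S_a^3 = Σ_a ∩ {x ∈ ℝ^n : x_i ≤ α for i = h+1,...,n}. If α ≥ a/n, the minimal element of S_a^3 with respect to the majorization order is (a/n) s^n. If α < a/n, the minimal element is ρ s^h + α v^h with ρ = (a − (n−h)α)/h. -/

import Mathlib

open Finset

noncomputable section

/-- `sv n j` is the vector `s^j ∈ ℝ^n`: first `j` components equal `1`, the rest `0`. -/
def sv (n j : ℕ) : Fin n → ℝ := fun i => if (i : ℕ) < j then 1 else 0

/-- `vv n j = s^n - s^j`: first `j` components equal `0`, the rest `1`. -/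
def vv (n j : ℕ) : Fin n → ℝ := fun i => if (i : ℕ) < j then 0 else 1

/-- `ev n j` is the `j`-th standard basis vector (`j` counted from `1`). -/
def ev (n j : ℕ) : Fin n → ℝ := fun i => if (i : ℕ) + 1 = j then 1 else 0

/-- Standard inner product on `ℝ^n`. -/
def inn {n : ℕ} (x y : Fin n → ℝ) : ℝ := ∑ i, x i * y i

/-- Hadamard (componentwise) product. -/
def had {n : ℕ} (x y : Fin n → ℝ) : Fin n → ℝ := fun i => x i * y i

/-- Sum of the first `k` components. -/
def psum {n : ℕ} (x : Fin n → ℝ) (k : ℕ) : ℝ := ∑ i : Fin n, if (i : ℕ) < k then x i else 0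

/-- Majorization order: `x ⊴ y` (for vectors with nonincreasing components). -/
def Maj {n : ℕ} (x y : Fin n → ℝ) : Prop :=
  (∀ k : ℕ, 1 ≤ k → k ≤ n - 1 → psum x k ≤ psum y k) ∧ (∑ i, x i = ∑ i, y i)

/-- `Σ_a = {x ∈ ℝ^n : x_1 ≥ ... ≥ x_n ≥ 0, Σ x_i = a}`. -/
def SigmaSet (n : ℕ) (a : ℝ) : Set (Fin n → ℝ) :=
  {x | (∀ i j : Fin n, i ≤ j → x j ≤ x i) ∧ (∀ i, 0 ≤ x i) ∧ (∑ i, x i = a)}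

/-- `S_a^[h] = Σ_a ∩ {x : M₁ ≥ x_1 ≥ ... ≥ x_h ≥ m₁, M₂ ≥ x_{h+1} ≥ ... ≥ x_n ≥ m₂}`. -/
def Sh (n h : ℕ) (a M1 M2 m1 m2 : ℝ) : Set (Fin n → ℝ) :=
  SigmaSet n a ∩
    {x | (∀ i : Fin n, (i : ℕ) < h → m1 ≤ x i ∧ x i ≤ M1) ∧
         (∀ i : Fin n, h ≤ (i : ℕ) → m2 ≤ x i ∧ x i ≤ M2)}

/-- `S_a^3 = Σ_a ∩ {x : x_i ≤ α, i = h+1,...,n}`. -/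
def S3 (n h : ℕ) (a α : ℝ) : Set (Fin n → ℝ) :=
  SigmaSet n a ∩ {x | ∀ i : Fin n, h ≤ (i : ℕ) → x i ≤ α}

/-!
The partial sums `S_k` of a nonincreasing vector grow at most linearly: `k · S_m ≤ m · S_k`
for `k ≤ m`. With `m = n` this makes the constant vector `(a/n) s^n` minimal in all of `Σ_a`.
When `α < a/n`, the cap `x_i ≤ α` on the tail forces `S_k ≥ a - (n - k) α` for `k ≥ h`, which
is exactly the partial sum of `ρ s^h + α v^h`; for `k ≤ h` the averaging inequality with
`m = h` takes over.
-/

/-- The vector `ρ s^h + α v^h`. -/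
def stepVec (n h : ℕ) (ρ α : ℝ) : Fin n → ℝ := fun i => if (i : ℕ) < h then ρ else α

section PartialSums

variable {n : ℕ}

lemma psum_zero (x : Fin n → ℝ) : psum x 0 = 0 := by
  simp [psum]

lemma psum_self (x : Fin n → ℝ) : psum x n = ∑ i, x i :=
  sum_congr rfl fun i _ => if_pos i.isLt

lemma psum_const (c : ℝ) {k : ℕ} (hk : k ≤ n) : psum (fun _ : Fin n => c) k = k * c := by
  rw [psum, ← sum_filter, sum_const, Fin.card_filter_val_lt, min_eq_right hk, nsmul_eq_mul]

lemma psum_sub_psum_le_psum_sub_psum {x y : Fin n → ℝ} {k m : ℕ} (hkm : k ≤ m)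
    (hxy : ∀ i : Fin n, k ≤ (i : ℕ) → (i : ℕ) < m → x i ≤ y i) :
    psum x m - psum x k ≤ psum y m - psum y k := by
  simp only [psum, ← sum_sub_distrib]
  refine sum_le_sum fun i _ => ?_
  by_cases hik : (i : ℕ) < k
  · simp [hik, hik.trans_le hkm]
  · by_cases him : (i : ℕ) < m
    · simpa [hik, him] using hxy i (not_lt.1 hik) him
    · simp [hik, him]

lemma psum_sub_psum_congr {x y : Fin n → ℝ} {k m : ℕ} (hkm : k ≤ m)
    (hxy : ∀ i : Fin n, k ≤ (i : ℕ) → (i : ℕ) < m → x i = y i) :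
    psum x m - psum x k = psum y m - psum y k :=
  le_antisymm (psum_sub_psum_le_psum_sub_psum hkm fun i hk hm => (hxy i hk hm).le)
    (psum_sub_psum_le_psum_sub_psum hkm fun i hk hm => (hxy i hk hm).ge)

lemma psum_sub_psum_le_of_le {x : Fin n → ℝ} {k m : ℕ} (hkm : k ≤ m) (hm : m ≤ n) {t : ℝ}
    (ht : ∀ i : Fin n, k ≤ (i : ℕ) → (i : ℕ) < m → x i ≤ t) :
    psum x m - psum x k ≤ (m - k) * t := by
  have := psum_sub_psum_le_psum_sub_psum (y := fun _ => t) hkm ht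
  rwa [psum_const t hm, psum_const t (hkm.trans hm), ← sub_mul] at this

lemma mul_le_psum_of_le {x : Fin n → ℝ} {k : ℕ} (hk : k ≤ n) {t : ℝ}
    (ht : ∀ i : Fin n, (i : ℕ) < k → t ≤ x i) : k * t ≤ psum x k := by
  have := psum_sub_psum_le_psum_sub_psum (x := fun _ => t) k.zero_le fun i _ hi => ht i hi
  rwa [psum_const t hk, psum_zero, psum_zero, sub_zero, sub_zero] at this

lemma sum_sub_psum_le_of_le {x : Fin n → ℝ} {k : ℕ} (hk : k ≤ n) {t : ℝ}
    (ht : ∀ i : Fin n, k ≤ (i : ℕ) → x i ≤ t) : ∑ i, x i - psum x k ≤ (n - k) * t := by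
  rw [← psum_self]
  exact psum_sub_psum_le_of_le hk le_rfl fun i hki _ => ht i hki

lemma mul_psum_le_mul_psum_of_antitone {x : Fin n → ℝ} (hx : Antitone x) {k m : ℕ}
    (hkm : k ≤ m) (hm : m ≤ n) : k * psum x m ≤ m * psum x k := by
  rcases hkm.eq_or_lt with rfl | hlt
  · exact le_rfl
  -- compare both blocks with the entry `x_{k+1}` that separates them
  set t := x ⟨k, by omega⟩
  have head : k * t ≤ psum x k :=
    mul_le_psum_of_le (by omega) fun i hi => hx (Fin.le_iff_val_le_val.2 hi.le)
  have block : psum x m - psum x k ≤ (m - k) * t :=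
    psum_sub_psum_le_of_le hkm hm fun i hi _ => hx (Fin.le_iff_val_le_val.2 hi)
  have hk : (0 : ℝ) ≤ k := k.cast_nonneg
  have hmk : (0 : ℝ) ≤ m - k := sub_nonneg.2 (by exact_mod_cast hkm)
  nlinarith [mul_le_mul_of_nonneg_left block hk, mul_le_mul_of_nonneg_left head hmk]

lemma mul_le_psum_of_antitone {x : Fin n → ℝ} (hx : Antitone x) {k m : ℕ} (hkm : k ≤ m)
    (hm : m ≤ n) {c : ℝ} (hc : m * c ≤ psum x m) : k * c ≤ psum x k := by
  rcases m.eq_zero_or_pos with rfl | hm0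
  · simp [Nat.le_zero.1 hkm, psum_zero]
  have hm0' : (0 : ℝ) < m := by exact_mod_cast hm0
  refine le_of_mul_le_mul_left ?_ hm0'
  calc m * (k * c) = k * (m * c) := by ring
    _ ≤ k * psum x m := mul_le_mul_of_nonneg_left hc k.cast_nonneg
    _ ≤ m * psum x k := mul_psum_le_mul_psum_of_antitone hx hkm hm

lemma maj_of_psum_le {x y : Fin n → ℝ} (hxy : ∀ k, k ≤ n → psum x k ≤ psum y k)
    (hsum : ∑ i, x i = ∑ i, y i) : Maj x y :=
  ⟨fun k _ hk => hxy k (by omega), hsum⟩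

end PartialSums

section StepVector

variable {n h : ℕ} {ρ α : ℝ}

lemma mul_sv_add_mul_vv_eq_stepVec :
    (fun i => ρ * sv n h i + α * vv n h i) = stepVec n h ρ α := by
  funext i
  by_cases hi : (i : ℕ) < h <;> simp [sv, vv, stepVec, hi]

lemma psum_stepVec_of_le {k : ℕ} (hkh : k ≤ h) (hkn : k ≤ n) :
    psum (stepVec n h ρ α) k = k * ρ := by
  have := psum_sub_psum_congr (x := stepVec n h ρ α) (y := fun _ => ρ) k.zero_le fun i _ hi =>
    if_pos (hi.trans_le hkh)
  rwa [psum_zero, psum_zero, sub_zero, sub_zero, psum_const ρ hkn] at this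

lemma psum_stepVec_of_ge {k : ℕ} (hhk : h ≤ k) (hkn : k ≤ n) :
    psum (stepVec n h ρ α) k = h * ρ + (k - h) * α := by
  have := psum_sub_psum_congr (x := stepVec n h ρ α) (y := fun _ => α) hhk fun i hi _ =>
    if_neg (not_lt.2 hi)
  rw [psum_const α hkn, psum_const α (hhk.trans hkn), psum_stepVec_of_le le_rfl (hhk.trans hkn)]
    at this
  linarith

lemma stepVec_mem_S3 (hhn : h ≤ n) (hα : 0 ≤ α) (hαρ : α ≤ ρ) {a : ℝ}
    (ha : h * ρ + (n - h) * α = a) : stepVec n h ρ α ∈ S3 n h a α := by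
  refine ⟨⟨fun i j hij => ?_, fun i => ?_, ?_⟩, fun i hi => ?_⟩
  · have hij' : (i : ℕ) ≤ j := hij
    unfold stepVec
    split_ifs <;> first | exact le_rfl | exact hαρ | omega
  · unfold stepVec; split_ifs <;> linarith
  · rw [← psum_self, psum_stepVec_of_ge hhn le_rfl, ha]
  · simp [stepVec, not_lt.2 hi]

lemma maj_stepVec_of_mem_S3 (hhn : h ≤ n) {a : ℝ} (ha : h * ρ + (n - h) * α = a)
    {x : Fin n → ℝ} (hx : x ∈ S3 n h a α) : Maj (stepVec n h ρ α) x := by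
  obtain ⟨⟨hanti, -, hsum⟩, htail⟩ := hx
  have tail {k : ℕ} (hhk : h ≤ k) (hkn : k ≤ n) : a - (n - k) * α ≤ psum x k := by
    linarith [sum_sub_psum_le_of_le hkn fun i hi => htail i (hhk.trans hi)]
  refine maj_of_psum_le (fun k hkn => ?_) ?_
  · rcases le_total k h with hkh | hhk
    · rw [psum_stepVec_of_le hkh hkn]
      exact mul_le_psum_of_antitone hanti hkh hhn (by linarith [tail le_rfl hhn])
    · rw [psum_stepVec_of_ge hhk hkn]
      linarith [tail hhk hkn]
  · rw [hsum, ← psum_self, psum_stepVec_of_ge hhn le_rfl, ha]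

end StepVector

section ConstantVector

variable {n : ℕ} {a : ℝ}

lemma sum_const_div_card (hn : n ≠ 0) : ∑ _i : Fin n, a / n = a := by
  rw [sum_const, card_univ, Fintype.card_fin, nsmul_eq_mul]
  field_simp

lemma const_div_mem_S3 (hn : n ≠ 0) (ha : 0 ≤ a) {h : ℕ} {α : ℝ} (hαn : a / n ≤ α) :
    (fun _ => a / n) ∈ S3 n h a α :=
  ⟨⟨fun _ _ _ => le_rfl, fun _ => by positivity, sum_const_div_card hn⟩, fun _ _ => hαn⟩

lemma maj_const_of_mem_sigmaSet (hn : n ≠ 0) {x : Fin n → ℝ} (hx : x ∈ SigmaSet n a) :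
    Maj (fun _ => a / n) x := by
  obtain ⟨hanti, -, hsum⟩ := hx
  refine maj_of_psum_le (fun k hkn => ?_) (by rw [sum_const_div_card hn, hsum])
  rw [psum_const _ hkn]
  refine mul_le_psum_of_antitone hanti hkn le_rfl ?_
  rw [psum_self, hsum, mul_div_cancel₀ a (Nat.cast_ne_zero.2 hn)]

end ConstantVector

theorem minimal_element_of_S3_general (n h : ℕ) (hh : 1 ≤ h) (hhn : h ≤ n - 1)
    (a α : ℝ) (ha : 0 < a) (hα : 0 < α) :
    (a / n ≤ α →
      ∀ xmin : Fin n → ℝ, xmin = (fun _ => a / n) →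
        xmin ∈ S3 n h a α ∧ ∀ x ∈ S3 n h a α, Maj xmin x) ∧
    (α < a / n →
      ∀ xmin : Fin n → ℝ, xmin = (fun i => (a - ((n : ℝ) - h) * α) / h * sv n h i + α * vv n h i) →
        xmin ∈ S3 n h a α ∧ ∀ x ∈ S3 n h a α, Maj xmin x) := by
  have hn : n ≠ 0 := by omega
  have hhn' : h ≤ n := by omega
  have hn0 : (0 : ℝ) < n := by exact_mod_cast Nat.pos_of_ne_zero hn
  have hh0 : (0 : ℝ) < h := by exact_mod_cast hh
  constructor
  · rintro hαn xmin rfl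
    exact ⟨const_div_mem_S3 hn ha.le hαn, fun x hx => maj_const_of_mem_sigmaSet hn hx.1⟩
  · rintro hαn xmin rfl
    set ρ := (a - ((n : ℝ) - h) * α) / h
    have hρ : h * ρ + (n - h) * α = a := by
      simp only [ρ]; field_simp; ring
    have hαρ : α ≤ ρ := by
      rw [lt_div_iff₀ hn0] at hαn
      rw [le_div_iff₀ hh0]
      linarith
    rw [mul_sv_add_mul_vv_eq_stepVec]
    exact ⟨stepVec_mem_S3 hhn' hα.le hαρ hρ, fun x hx => maj_stepVec_of_mem_S3 hhn' hρ hx⟩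

/-- Minimal element of `S_a^3`: `(a/n) s^n` if `α ≥ a/n`, and `ρ s^h + α v^h` with
`ρ = (a - (n-h)α)/h` if `α < a/n`. -/
theorem minimal_element_of_S3 (n h : ℕ) (hh : 1 ≤ h) (hhn : h ≤ n - 1)
    (a α : ℝ) (ha : 0 < a) (hα : 0 < α) (hαa : α < a) :
    (a / n ≤ α →
      ∀ xmin : Fin n → ℝ, xmin = (fun _ => a / n) →
        xmin ∈ S3 n h a α ∧ ∀ x ∈ S3 n h a α, Maj xmin x) ∧
    (α < a / n →
      ∀ xmin : Fin n → ℝ, xmin = (fun i => (a - ((n : ℝ) - h) * α) / h * sv n h i + α * vv n h i) →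
        xmin ∈ S3 n h a α ∧ ∀ x ∈ S3 n h a α, Maj xmin x) :=
  minimal_element_of_S3_general n h hh hhn a α ha hα
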